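/- Let P, Q be strictly positive probability distributions on a finite set Y with P(y), Q(y) ≥ c > 0 and KL(P‖Q) ≤ ε for some 0 < ε < 1. Then the squared Hellinger distance satisfies H²(P,Q) = (1/4)·KL(P‖Q)·(1 + O(√ε)), i.e., there is a constant c₀ depending only on c with |4·H²(P,Q) − KL(P‖Q)| ≤ c₀ √ε · KL(P‖Q). -/

import Mathlib

/-!
Write `q = p (1 + x)²` pointwise. The Bregman form `p log (p / q) + q - p` of the KL summand is
then `p (x² + 2x - 2 log (1 + x)) ≥ p x²`, and the Hellinger summand `2 (√p - √q)²` is `2 p x²`.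
Their difference `p (x² - 2x + 2 log (1 + x))` is `O(p |x|³)` by Taylor expansion of the
logarithm, while `p x² ≤ KL` and `p ≥ c` force `|x| ≤ √(KL / c)`.
-/

/-- Kullback–Leibler divergence between two pmfs on a finite set. -/
noncomputable def klDiv' {Y : Type*} [Fintype Y] (P Q : Y → ℝ) : ℝ :=
  ∑ y, P y * Real.log (P y / Q y)

/-- Squared Hellinger distance between two pmfs on a finite set. -/
noncomputable def hellingerSq {Y : Type*} [Fintype Y] (P Q : Y → ℝ) : ℝ :=
  (1 / 2) * ∑ y, (Real.sqrt (P y) - Real.sqrt (Q y)) ^ 2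

open Real Finset

noncomputable def klTerm (p q : ℝ) : ℝ := p * log (p / q) + q - p

lemma klTerm_nonneg {p q : ℝ} (hp : 0 < p) (hq : 0 < q) : 0 ≤ klTerm p q := by
  have hlog := one_sub_inv_le_log_of_pos (div_pos hp hq)
  rw [inv_div, sub_le_iff_le_add] at hlog
  have := mul_le_mul_of_nonneg_left hlog hp.le
  rw [mul_add, mul_div_cancel₀ _ hp.ne', mul_one] at this
  rw [klTerm]
  linarith

lemma klTerm_mul_one_add_sq {p : ℝ} (x : ℝ) (hp : 0 < p) :
    klTerm p (p * (1 + x) ^ 2) = p * (x ^ 2 + 2 * x - 2 * log (1 + x)) := by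
  rw [klTerm, div_mul_cancel_left₀ hp.ne', log_inv, log_pow]
  push_cast
  ring

lemma mul_sq_le_klTerm {p x : ℝ} (hp : 0 < p) (hx : 0 < 1 + x) :
    p * x ^ 2 ≤ klTerm p (p * (1 + x) ^ 2) := by
  rw [klTerm_mul_one_add_sq x hp]
  have := log_le_sub_one_of_pos hx
  exact mul_le_mul_of_nonneg_left (by linarith) hp.le

lemma two_mul_sq_sqrt_sub_sqrt_mul_one_add_sq {p x : ℝ} (hp : 0 ≤ p) (hx : 0 ≤ 1 + x) :
    2 * (√p - √(p * (1 + x) ^ 2)) ^ 2 = p * (2 * x ^ 2) := by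
  rw [sqrt_mul hp, sqrt_sq hx, show √p - √p * (1 + x) = -(√p * x) by ring, neg_sq, mul_pow,
    sq_sqrt hp]
  ring

lemma abs_sq_sub_two_mul_add_two_mul_log_le_of_abs_lt_one {x : ℝ} (hx : |x| < 1) :
    |x ^ 2 - 2 * x + 2 * log (1 + x)| ≤ 2 * |x| ^ 3 / (1 - |x|) := by
  have key := abs_log_sub_add_sum_range_le (x := -x) (by rwa [abs_neg]) 2
  simp only [sum_range_succ, sum_range_zero, abs_neg, sub_neg_eq_add] at key
  norm_num at key
  calc |x ^ 2 - 2 * x + 2 * log (1 + x)| = 2 * |-x + x ^ 2 / 2 + log (1 + x)| := by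
        rw [← abs_two, ← abs_mul]; ring_nf
    _ ≤ 2 * |x| ^ 3 / (1 - |x|) := by rw [mul_div_assoc]; gcongr

lemma abs_sq_sub_two_mul_add_two_mul_log_le_of_half_le {x : ℝ} (hx : 1 / 2 ≤ x) :
    |x ^ 2 - 2 * x + 2 * log (1 + x)| ≤ 2 * x ^ 3 := by
  have h1x : 0 < 1 + x := by linarith
  have hup : log (1 + x) ≤ x := by linarith [log_le_sub_one_of_pos h1x]
  have hlow : 1 - (1 + x)⁻¹ ≤ log (1 + x) := one_sub_inv_le_log_of_pos h1x
  have hgap : x ^ 2 - 2 * x + 2 * (1 - (1 + x)⁻¹) + 2 * x ^ 3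
      = x ^ 2 * (2 * x ^ 2 + 3 * x - 1) / (1 + x) := by
    field_simp
    ring
  have hpos : 0 ≤ x ^ 2 * (2 * x ^ 2 + 3 * x - 1) / (1 + x) := by
    apply div_nonneg _ h1x.le
    nlinarith
  rw [abs_le]
  constructor <;> nlinarith

lemma abs_sq_sub_two_mul_add_two_mul_log_le {a x : ℝ} (ha : 0 < a) (ha1 : a ≤ 1)
    (hx : a ≤ 1 + x) : |x ^ 2 - 2 * x + 2 * log (1 + x)| ≤ 4 / a * |x| ^ 3 := by
  rcases lt_or_ge x (1 / 2) with hsmall | hbig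
  · have hxa : a / 2 ≤ 1 - |x| := by cases abs_cases x <;> linarith
    calc |x ^ 2 - 2 * x + 2 * log (1 + x)| ≤ 2 * |x| ^ 3 / (1 - |x|) :=
          abs_sq_sub_two_mul_add_two_mul_log_le_of_abs_lt_one (by linarith)
      _ ≤ 2 * |x| ^ 3 / (a / 2) := by gcongr
      _ = 4 / a * |x| ^ 3 := by field_simp; ring
  · have h2a : 2 ≤ 4 / a := by rw [le_div_iff₀ ha]; linarith
    calc |x ^ 2 - 2 * x + 2 * log (1 + x)| ≤ 2 * x ^ 3 :=
          abs_sq_sub_two_mul_add_two_mul_log_le_of_half_le hbig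
      _ ≤ 4 / a * |x| ^ 3 := by rw [abs_of_nonneg (by linarith)]; gcongr

lemma abs_two_mul_sq_sqrt_sub_sub_klTerm_le {p q a : ℝ} (hp : 0 < p) (ha : 0 < a) (ha1 : a ≤ 1)
    (hq : a ^ 2 * p ≤ q) :
    |2 * (√p - √q) ^ 2 - klTerm p q| ≤ 4 / a * √(klTerm p q / p) * klTerm p q := by
  obtain ⟨x, hx, rfl⟩ : ∃ x, a ≤ 1 + x ∧ q = p * (1 + x) ^ 2 := by
    refine ⟨√(q / p) - 1, ?_, ?_⟩
    · rw [add_sub_cancel, le_sqrt' ha, le_div_iff₀ hp]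
      exact hq
    · rw [add_sub_cancel, sq_sqrt (div_nonneg (by nlinarith) hp.le), mul_div_cancel₀ _ hp.ne']
  have hx0 : 0 < 1 + x := ha.trans_le hx
  set K := klTerm p (p * (1 + x) ^ 2) with hK
  have hpx : p * x ^ 2 ≤ K := mul_sq_le_klTerm hp hx0
  have hxK : |x| ≤ √(K / p) := abs_le_sqrt (by rw [le_div_iff₀ hp]; linarith)
  have hgap : 2 * (√p - √(p * (1 + x) ^ 2)) ^ 2 - K = p * (x ^ 2 - 2 * x + 2 * log (1 + x)) := by
    rw [two_mul_sq_sqrt_sub_sqrt_mul_one_add_sq hp.le hx0.le, hK, klTerm_mul_one_add_sq x hp]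
    ring
  calc |2 * (√p - √(p * (1 + x) ^ 2)) ^ 2 - K| = p * |x ^ 2 - 2 * x + 2 * log (1 + x)| := by
        rw [hgap, abs_mul, abs_of_pos hp]
    _ ≤ p * (4 / a * |x| ^ 3) := by gcongr; exact abs_sq_sub_two_mul_add_two_mul_log_le ha ha1 hx
    _ = 4 / a * |x| * (p * x ^ 2) := by rw [pow_succ, sq_abs]; ring
    _ ≤ 4 / a * √(K / p) * K := by gcongr

section Sums

variable {Y : Type*} [Fintype Y]

lemma klDiv'_eq_sum_klTerm {P Q : Y → ℝ} (h : ∑ y, P y = ∑ y, Q y) :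
    klDiv' P Q = ∑ y, klTerm (P y) (Q y) := by
  simp only [klTerm, klDiv', sum_sub_distrib, sum_add_distrib, h]
  ring

lemma klDiv'_nonneg {P Q : Y → ℝ} (hP : ∀ y, 0 < P y) (hQ : ∀ y, 0 < Q y)
    (h : ∑ y, P y = ∑ y, Q y) : 0 ≤ klDiv' P Q := by
  rw [klDiv'_eq_sum_klTerm h]
  exact sum_nonneg fun y _ => klTerm_nonneg (hP y) (hQ y)

lemma four_mul_hellingerSq (P Q : Y → ℝ) :
    4 * hellingerSq P Q = ∑ y, 2 * (√(P y) - √(Q y)) ^ 2 := by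
  rw [hellingerSq, ← mul_sum]
  ring

theorem abs_four_mul_hellingerSq_sub_klDiv'_le {P Q : Y → ℝ} {c : ℝ} (hc : 0 < c)
    (hP : ∀ y, c ≤ P y) (hQ : ∀ y, c ≤ Q y) (hPsum : ∑ y, P y = 1) (hQsum : ∑ y, Q y = 1) :
    |4 * hellingerSq P Q - klDiv' P Q| ≤ 4 / c * √(klDiv' P Q) * klDiv' P Q := by
  have hP0 : ∀ y, 0 < P y := fun y => hc.trans_le (hP y)
  have hQ0 : ∀ y, 0 < Q y := fun y => hc.trans_le (hQ y)
  have hsum : ∑ y, P y = ∑ y, Q y := hPsum.trans hQsum.symm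
  have hKL := klDiv'_nonneg hP0 hQ0 hsum
  have hP1 : ∀ y, P y ≤ 1 := fun y =>
    hPsum ▸ single_le_sum (fun z _ => (hP0 z).le) (mem_univ y)
  have hc1 : c ≤ 1 := by
    obtain ⟨y⟩ : Nonempty Y := by
      by_contra h
      simp [not_nonempty_iff.1 h] at hPsum
    exact (hP y).trans (hP1 y)
  have hterm_le : ∀ y, klTerm (P y) (Q y) ≤ klDiv' P Q := fun y => by
    rw [klDiv'_eq_sum_klTerm hsum]
    exact single_le_sum (fun z _ => klTerm_nonneg (hP0 z) (hQ0 z)) (mem_univ y)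
  have hpt : ∀ y, |2 * (√(P y) - √(Q y)) ^ 2 - klTerm (P y) (Q y)|
      ≤ 4 / c * √(klDiv' P Q) * klTerm (P y) (Q y) := fun y => by
    have hsc : √c ^ 2 = c := sq_sqrt hc.le
    calc _ ≤ 4 / √c * √(klTerm (P y) (Q y) / P y) * klTerm (P y) (Q y) :=
          abs_two_mul_sq_sqrt_sub_sub_klTerm_le (hP0 y) (sqrt_pos.2 hc) (sqrt_le_one.2 hc1)
            (by rw [hsc]; nlinarith [hP1 y, hQ y])
      _ ≤ 4 / √c * √(klDiv' P Q / c) * klTerm (P y) (Q y) := by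
          gcongr
          exacts [klTerm_nonneg (hP0 y) (hQ0 y), hterm_le y, hP y]
      _ = 4 / c * √(klDiv' P Q) * klTerm (P y) (Q y) := by
          rw [sqrt_div' _ hc.le]
          field_simp
          rw [hsc]
          ring
  calc |4 * hellingerSq P Q - klDiv' P Q|
      = |∑ y, (2 * (√(P y) - √(Q y)) ^ 2 - klTerm (P y) (Q y))| := by
        rw [four_mul_hellingerSq, klDiv'_eq_sum_klTerm hsum, sum_sub_distrib]
    _ ≤ ∑ y, |2 * (√(P y) - √(Q y)) ^ 2 - klTerm (P y) (Q y)| := abs_sum_le_sum_abs _ _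
    _ ≤ ∑ y, 4 / c * √(klDiv' P Q) * klTerm (P y) (Q y) := sum_le_sum fun y _ => hpt y
    _ = 4 / c * √(klDiv' P Q) * klDiv' P Q := by rw [← mul_sum, ← klDiv'_eq_sum_klTerm hsum]

end Sums

/-- If `P, Q` are pmfs bounded below by `c > 0` and `KL(P‖Q) ≤ ε < 1`, then
`H²(P,Q) = (1/4) KL(P‖Q) (1 + O(√ε))`, where the implicit constant depends
only on `c`. -/
theorem hellingerSq_eq_quarter_kl (c : ℝ) (hc : 0 < c) :
    ∃ c₀ : ℝ, 0 < c₀ ∧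
      ∀ (Y : Type) [Fintype Y] (P Q : Y → ℝ) (ε : ℝ),
        (∀ y, c ≤ P y) → (∀ y, c ≤ Q y) →
        (∑ y, P y = 1) → (∑ y, Q y = 1) →
        0 < ε → ε < 1 → klDiv' P Q ≤ ε →
        |4 * hellingerSq P Q - klDiv' P Q| ≤ c₀ * Real.sqrt ε * klDiv' P Q := by
  refine ⟨4 / c, by positivity, fun Y _ P Q ε hP hQ hPsum hQsum _ _ hKLε => ?_⟩
  have hKL : 0 ≤ klDiv' P Q := klDiv'_nonneg (fun y => hc.trans_le (hP y))
    (fun y => hc.trans_le (hQ y)) (hPsum.trans hQsum.symm)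
  calc |4 * hellingerSq P Q - klDiv' P Q| ≤ 4 / c * √(klDiv' P Q) * klDiv' P Q :=
        abs_four_mul_hellingerSq_sub_klDiv'_le hc hP hQ hPsum hQsum
    _ ≤ 4 / c * √ε * klDiv' P Q := by gcongr
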